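/- With Λ as in the ℝ^{(4)} automatic differentiation (Λ(f)(x + a₁ε + a₂ε² + a₃ε³) = f(x) + a₁f'(x)ε + (a₂f' + ½a₁²f'')(x)ε² + (a₃f' + a₁a₂f'' + ⅙a₁³f''')(x)ε³), and for real constants α ≠ 0, β, γ, the composition law holds at Ω(x) = x + αε + βε² + γε³: Λ(f∘g)(Ω(x)) = Λ(f)(Λ(g)(Ω(x))), for f three times differentiable at g(x) and g three times differentiable at x. -/

import Mathlib

open Polynomial

/-- The truncated polynomial algebra `ℝ[X]/(X⁴)`. -/
noncomputable abbrev R4 : Type := Polynomial ℝ ⧸ Ideal.span {(X : Polynomial ℝ) ^ 4}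

/-- `ε`, the image of `X` in `ℝ[X]/(X⁴)`. -/
noncomputable def eps : R4 := Ideal.Quotient.mk _ (X : Polynomial ℝ)

/-- The embedding of real scalars into `ℝ[X]/(X⁴)`. -/
noncomputable def Cc : ℝ →+* R4 := algebraMap ℝ R4

/-- `Λ(f)(x + a₁ε + a₂ε² + a₃ε³)`, the `ℝ⁽⁴⁾`-extension of a function `f` that is
three times differentiable at `x`. -/
noncomputable def Lam (f : ℝ → ℝ) (x a₁ a₂ a₃ : ℝ) : R4 :=
  Cc (f x) + Cc (a₁ * deriv f x) * eps +
    Cc (a₂ * deriv f x + 1 / 2 * a₁ ^ 2 * iteratedDeriv 2 f x) * eps ^ 2 +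
    Cc (a₃ * deriv f x + a₁ * a₂ * iteratedDeriv 2 f x +
        1 / 6 * a₁ ^ 3 * iteratedDeriv 3 f x) * eps ^ 3

theorem Lam_comp_general (f g : ℝ → ℝ) (x α β γ : ℝ)
    (hg : ContDiffAt ℝ 3 g x) (hf : ContDiffAt ℝ 3 f (g x)) :
    Lam (f ∘ g) x α β γ =
      Lam f (g x) (α * deriv g x)
        (β * deriv g x + 1 / 2 * α ^ 2 * iteratedDeriv 2 g x)
        (γ * deriv g x + α * β * iteratedDeriv 2 g x +
          1 / 6 * α ^ 3 * iteratedDeriv 3 g x) := by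
  have h₁ : deriv (f ∘ g) x = deriv f (g x) * deriv g x :=
    deriv_comp x (hf.differentiableAt (by norm_num)) (hg.differentiableAt (by norm_num))
  have h₂ := iteratedDeriv_comp_two (hf.of_le (by norm_num)) (hg.of_le (by norm_num))
  have h₃ := iteratedDeriv_comp_three hf hg
  simp only [Lam, Function.comp_apply, h₁, h₂, h₃]
  -- the remaining goals are the ε-, ε²- and ε³-coefficients
  congr 3
  · congr 2; ring
  · congr 1; ring
  · ring

/-- `Λ` preserves composition at `Ω(x) = x + αε + βε² + γε³`:
`Λ(f∘g)(Ω(x)) = Λ(f)(Λ(g)(Ω(x)))`, where `Λ(g)(Ω(x))` has degree-1 coefficient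
`αg'(x)`, degree-2 coefficient `βg'(x) + ½α²g''(x)`, and degree-3 coefficient
`γg'(x) + αβg''(x) + ⅙α³g'''(x)`. -/
theorem Lam_comp (f g : ℝ → ℝ) (x α β γ : ℝ) (hα : α ≠ 0)
    (hg : ContDiffAt ℝ 3 g x) (hf : ContDiffAt ℝ 3 f (g x)) :
    Lam (f ∘ g) x α β γ =
      Lam f (g x) (α * deriv g x)
        (β * deriv g x + 1 / 2 * α ^ 2 * iteratedDeriv 2 g x)
        (γ * deriv g x + α * β * iteratedDeriv 2 g x +
          1 / 6 * α ^ 3 * iteratedDeriv 3 g x) :=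
  Lam_comp_general f g x α β γ hg hf
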